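/- Conditional distributions of the stationary measure are logit best responses: let π(S) = exp(Φ(S)/β) / Σ_{Ŝ ∈ 𝒮_n} exp(Φ(Ŝ)/β) with β > 0. For every player i and every fixed configuration S_{−(i)} of the coordinates not controlled by i, the conditional distribution under π of player i's choice S_{(i)} = (a_i, {g_{ij}}_{j≠i}) given S_{−(i)} is the softmax of i's own payoff: π(S_{(i)} | S_{−(i)}) = exp(u_i(S_{(i)}, S_{−(i)})/β) / Σ_{S'_{(i)} ∈ {0,1}^n} exp(u_i(S'_{(i)}, S_{−(i)})/β). In particular every choice of player i receives strictly positive conditional probability, and choices with higher payoff receive higher conditional probability. -/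
import Mathlib


open Finset

noncomputable section

/-- A network state: the diagonal entry `S i i` is player `i`'s action status `a_i`,
and the off-diagonal entry `S i j` (for `i ≠ j`) is the link status `g_{ij}`. -/
abbrev NetState (n : ℕ) := Fin n → Fin n → Bool

/-- Numerical (0/1) value of a Boolean coordinate. -/
def bv (x : Bool) : ℝ := if x then 1 else 0

/-- Player `i`'s payoff
`u_i(S) = a_i v_i + h a_i Σ_{j≠i} a_j + φ a_i Σ_{j≠i} g_{ij} g_{ji} a_j
  + Σ_{j≠i} g_{ij} w_{ij} + m Σ_{j≠i} g_{ij} g_{ji}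
  + q Σ_{j,l pairwise distinct from each other and from i} g_{ij} g_{jl} g_{li}`. -/
def payoff (n : ℕ) (v : Fin n → ℝ) (w : Fin n → Fin n → ℝ) (h φ m q : ℝ)
    (S : NetState n) (i : Fin n) : ℝ :=
  bv (S i i) * v i
    + h * bv (S i i) * ∑ j ∈ univ.filter (fun j => j ≠ i), bv (S j j)
    + φ * bv (S i i) * ∑ j ∈ univ.filter (fun j => j ≠ i), bv (S i j) * bv (S j i) * bv (S j j)
    + ∑ j ∈ univ.filter (fun j => j ≠ i), bv (S i j) * w i j
    + m * ∑ j ∈ univ.filter (fun j => j ≠ i), bv (S i j) * bv (S j i)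
    + q * ∑ j ∈ univ.filter (fun j => j ≠ i),
        ∑ l ∈ univ.filter (fun l => l ≠ i ∧ l ≠ j),
          bv (S i j) * bv (S j l) * bv (S l i)

/-- The potential
`Φ(S) = Σ_i a_i v_i + (h/2) Σ_{i≠j} a_i a_j + (φ/2) Σ_{i≠j} a_i a_j g_{ij} g_{ji}
  + Σ_{i≠j} g_{ij} w_{ij} + (m/2) Σ_{i≠j} g_{ij} g_{ji}
  + (q/3) Σ_{i,j,l pairwise distinct} g_{ij} g_{jl} g_{li}`. -/
def potential (n : ℕ) (v : Fin n → ℝ) (w : Fin n → Fin n → ℝ) (h φ m q : ℝ)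
    (S : NetState n) : ℝ :=
  (∑ i, bv (S i i) * v i)
    + (h / 2) * ∑ i, ∑ j ∈ univ.filter (fun j => j ≠ i), bv (S i i) * bv (S j j)
    + (φ / 2) * ∑ i, ∑ j ∈ univ.filter (fun j => j ≠ i),
        bv (S i i) * bv (S j j) * bv (S i j) * bv (S j i)
    + (∑ i, ∑ j ∈ univ.filter (fun j => j ≠ i), bv (S i j) * w i j)
    + (m / 2) * ∑ i, ∑ j ∈ univ.filter (fun j => j ≠ i), bv (S i j) * bv (S j i)
    + (q / 3) * ∑ i, ∑ j ∈ univ.filter (fun j => j ≠ i),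
        ∑ l ∈ univ.filter (fun l => l ≠ i ∧ l ≠ j), bv (S i j) * bv (S j l) * bv (S l i)

/-- The stationary distribution `π(S) = exp(Φ(S)/β) / Σ_T exp(Φ(T)/β)`. -/
noncomputable def statDist (n : ℕ) (v : Fin n → ℝ) (w : Fin n → Fin n → ℝ) (h φ m q β : ℝ)
    (S : NetState n) : ℝ :=
  Real.exp (potential n v w h φ m q S / β)
    / ∑ T : NetState n, Real.exp (potential n v w h φ m q T / β)

/-- The state obtained from `T` by replacing player `i`'s choice coordinates
`S_{(i)} = (a_i, {g_{ij}}_{j≠i})` (the `i`-th row) with `r : Fin n → Bool`. -/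
def updRow (n : ℕ) (i : Fin n) (r : Fin n → Bool) (T : NetState n) : NetState n :=
  fun x y => if x = i then r y else T x y

/-- The conditional probability under `π` of player `i` choosing row `r` given the remaining
coordinates of `T`. -/
noncomputable def condProb (n : ℕ) (v : Fin n → ℝ) (w : Fin n → Fin n → ℝ) (h φ m q β : ℝ)
    (i : Fin n) (T : NetState n) (r : Fin n → Bool) : ℝ :=
  statDist n v w h φ m q β (updRow n i r T)
    / ∑ r' : Fin n → Bool, statDist n v w h φ m q β (updRow n i r' T)


/-! ### Auxiliary lemmas -/

theorem sum_split {n : ℕ} (p : Fin n → Prop) [DecidablePred p] (a : Fin n) (ha : p a)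
    (f : Fin n → ℝ) :
    ∑ x ∈ univ.filter p, f x = f a + ∑ x ∈ univ.filter (fun x => p x ∧ x ≠ a), f x := by
  rw [← Finset.add_sum_erase _ f (Finset.mem_filter.mpr ⟨Finset.mem_univ a, ha⟩)]
  congr 1
  apply Finset.sum_congr ?_ (fun _ _ => rfl)
  ext x
  simp only [Finset.mem_erase, Finset.mem_filter, Finset.mem_univ, true_and]
  tauto

theorem sum_split_univ {n : ℕ} (a : Fin n) (f : Fin n → ℝ) :
    ∑ x, f x = f a + ∑ x ∈ univ.filter (fun x => x ≠ a), f x := by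
  rw [← Finset.add_sum_erase _ f (Finset.mem_univ a)]
  congr 1
  apply Finset.sum_congr ?_ (fun _ _ => rfl)
  ext x
  simp [Finset.mem_erase]

theorem double_split {n : ℕ} (i : Fin n) (g : Fin n → Fin n → ℝ) :
    ∑ x, ∑ y ∈ univ.filter (fun y => y ≠ x), g x y
      = (∑ y ∈ univ.filter (fun y => y ≠ i), g i y)
        + (∑ x ∈ univ.filter (fun x => x ≠ i), g x i)
        + ∑ x ∈ univ.filter (fun x => x ≠ i), ∑ y ∈ univ.filter (fun y => y ≠ x ∧ y ≠ i), g x y := by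
  rw [sum_split_univ i]
  have : ∀ x ∈ univ.filter (fun x => x ≠ i),
      ∑ y ∈ univ.filter (fun y => y ≠ x), g x y
        = g x i + ∑ y ∈ univ.filter (fun y => y ≠ x ∧ y ≠ i), g x y := by
    intro x hx
    simp only [Finset.mem_filter, Finset.mem_univ, true_and] at hx
    exact sum_split (fun y => y ≠ x) i (Ne.symm hx) _
  rw [Finset.sum_congr rfl this, Finset.sum_add_distrib]
  ring

theorem triple_split {n : ℕ} (i : Fin n) (g : Fin n → Fin n → Fin n → ℝ) :
    ∑ x, ∑ y ∈ univ.filter (fun y => y ≠ x),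
        ∑ z ∈ univ.filter (fun z => z ≠ x ∧ z ≠ y), g x y z
      = (∑ y ∈ univ.filter (fun y => y ≠ i),
            ∑ z ∈ univ.filter (fun z => z ≠ i ∧ z ≠ y), g i y z)
        + (∑ x ∈ univ.filter (fun x => x ≠ i),
            ∑ z ∈ univ.filter (fun z => z ≠ x ∧ z ≠ i), g x i z)
        + (∑ x ∈ univ.filter (fun x => x ≠ i),
            ∑ y ∈ univ.filter (fun y => y ≠ x ∧ y ≠ i), g x y i)
        + ∑ x ∈ univ.filter (fun x => x ≠ i),
            ∑ y ∈ univ.filter (fun y => y ≠ x ∧ y ≠ i),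
              ∑ z ∈ univ.filter (fun z => z ≠ x ∧ z ≠ y ∧ z ≠ i), g x y z := by
  rw [sum_split_univ i]
  have key : ∀ x ∈ univ.filter (fun x => x ≠ i),
      ∑ y ∈ univ.filter (fun y => y ≠ x), ∑ z ∈ univ.filter (fun z => z ≠ x ∧ z ≠ y), g x y z
        = (∑ z ∈ univ.filter (fun z => z ≠ x ∧ z ≠ i), g x i z)
          + ((∑ y ∈ univ.filter (fun y => y ≠ x ∧ y ≠ i), g x y i)
            + ∑ y ∈ univ.filter (fun y => y ≠ x ∧ y ≠ i),
                ∑ z ∈ univ.filter (fun z => z ≠ x ∧ z ≠ y ∧ z ≠ i), g x y z) := by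
    intro x hx
    simp only [Finset.mem_filter, Finset.mem_univ, true_and] at hx
    rw [sum_split (fun y => y ≠ x) i (Ne.symm hx)]
    congr 1
    have : ∀ y ∈ univ.filter (fun y => y ≠ x ∧ y ≠ i),
        ∑ z ∈ univ.filter (fun z => z ≠ x ∧ z ≠ y), g x y z
          = g x y i + ∑ z ∈ univ.filter (fun z => (z ≠ x ∧ z ≠ y) ∧ z ≠ i), g x y z := by
      intro y hy
      simp only [Finset.mem_filter, Finset.mem_univ, true_and] at hy
      exact sum_split (fun z => z ≠ x ∧ z ≠ y) i ⟨Ne.symm hx, Ne.symm hy.2⟩ _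
    rw [Finset.sum_congr rfl this, Finset.sum_add_distrib]
    congr 1
    apply Finset.sum_congr rfl
    intro y _
    apply Finset.sum_congr ?_ (fun _ _ => rfl)
    ext z; simp; tauto
  rw [Finset.sum_congr rfl key, Finset.sum_add_distrib, Finset.sum_add_distrib]
  ring

theorem sum_swap_ne {n : ℕ} (i : Fin n) (f : Fin n → Fin n → ℝ) :
    ∑ j ∈ univ.filter (fun j => j ≠ i), ∑ l ∈ univ.filter (fun l => l ≠ i ∧ l ≠ j), f j l
      = ∑ j ∈ univ.filter (fun j => j ≠ i), ∑ l ∈ univ.filter (fun l => l ≠ i ∧ l ≠ j), f l j := by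
  rw [Finset.sum_comm' (t' := univ.filter (fun j => j ≠ i))
    (s' := fun l => univ.filter (fun j => j ≠ i ∧ j ≠ l))]
  intro x y
  simp only [Finset.mem_filter, Finset.mem_univ, true_and]
  constructor
  · rintro ⟨h1, h2, h3⟩; exact ⟨⟨h1, h3.symm⟩, h2⟩
  · rintro ⟨⟨h1, h3⟩, h2⟩; exact ⟨h1, h2, h3.symm⟩

/-- The part of the potential not controlled by player `i`. -/
def psi (n : ℕ) (v : Fin n → ℝ) (w : Fin n → Fin n → ℝ) (h φ m q : ℝ) (i : Fin n)
    (T : NetState n) : ℝ :=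
  (∑ j ∈ univ.filter (fun j => j ≠ i), bv (T j j) * v j)
  + (h / 2) * (∑ x ∈ univ.filter (fun x => x ≠ i),
      ∑ y ∈ univ.filter (fun y => y ≠ x ∧ y ≠ i), bv (T x x) * bv (T y y))
  + (φ / 2) * (∑ x ∈ univ.filter (fun x => x ≠ i),
      ∑ y ∈ univ.filter (fun y => y ≠ x ∧ y ≠ i),
        bv (T x x) * bv (T y y) * bv (T x y) * bv (T y x))
  + ((∑ x ∈ univ.filter (fun x => x ≠ i), bv (T x i) * w x i)
     + ∑ x ∈ univ.filter (fun x => x ≠ i),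
        ∑ y ∈ univ.filter (fun y => y ≠ x ∧ y ≠ i), bv (T x y) * w x y)
  + (m / 2) * (∑ x ∈ univ.filter (fun x => x ≠ i),
      ∑ y ∈ univ.filter (fun y => y ≠ x ∧ y ≠ i), bv (T x y) * bv (T y x))
  + (q / 3) * (∑ x ∈ univ.filter (fun x => x ≠ i),
      ∑ y ∈ univ.filter (fun y => y ≠ x ∧ y ≠ i),
        ∑ z ∈ univ.filter (fun z => z ≠ x ∧ z ≠ y ∧ z ≠ i),
          bv (T x y) * bv (T y z) * bv (T z x))

theorem pot_eq (n : ℕ) (v : Fin n → ℝ) (w : Fin n → Fin n → ℝ) (h φ m q : ℝ)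
    (i : Fin n) (T : NetState n) (r : Fin n → Bool) :
    potential n v w h φ m q (updRow n i r T)
      = payoff n v w h φ m q (updRow n i r T) i + psi n v w h φ m q i T := by
  set S := updRow n i r T with hS
  have hb1 : ∀ y, bv (S i y) = bv (r y) := fun y => by simp [hS, updRow]
  have hb2 : ∀ x y, x ≠ i → bv (S x y) = bv (T x y) := fun x y hx => by simp [hS, updRow, hx]
  have mem_ne : ∀ {x a : Fin n}, x ∈ univ.filter (fun y => y ≠ a) → x ≠ a :=
    fun hx => by simpa using hx
  have mem_ne2 : ∀ {x a b : Fin n}, x ∈ univ.filter (fun y => y ≠ a ∧ y ≠ b) → x ≠ a ∧ x ≠ b :=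
    fun hx => by simpa using hx
  have mem_ne3 : ∀ {x a b c : Fin n},
      x ∈ univ.filter (fun y => y ≠ a ∧ y ≠ b ∧ y ≠ c) → x ≠ a ∧ x ≠ b ∧ x ≠ c :=
    fun hx => by simpa using hx
  -- payoff components
  have F2 : (∑ j ∈ univ.filter (fun j => j ≠ i), bv (S j j))
      = ∑ j ∈ univ.filter (fun j => j ≠ i), bv (T j j) :=
    Finset.sum_congr rfl fun j hj => by rw [hb2 _ _ (mem_ne hj)]
  have F3 : (∑ j ∈ univ.filter (fun j => j ≠ i), bv (S i j) * bv (S j i) * bv (S j j))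
      = ∑ j ∈ univ.filter (fun j => j ≠ i), bv (r j) * bv (T j i) * bv (T j j) :=
    Finset.sum_congr rfl fun j hj => by
      rw [hb1, hb2 _ _ (mem_ne hj), hb2 _ _ (mem_ne hj)]
  have F4 : (∑ j ∈ univ.filter (fun j => j ≠ i), bv (S i j) * w i j)
      = ∑ j ∈ univ.filter (fun j => j ≠ i), bv (r j) * w i j :=
    Finset.sum_congr rfl fun j hj => by rw [hb1]
  have F5 : (∑ j ∈ univ.filter (fun j => j ≠ i), bv (S i j) * bv (S j i))
      = ∑ j ∈ univ.filter (fun j => j ≠ i), bv (r j) * bv (T j i) :=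
    Finset.sum_congr rfl fun j hj => by rw [hb1, hb2 _ _ (mem_ne hj)]
  have F6 : (∑ j ∈ univ.filter (fun j => j ≠ i),
        ∑ l ∈ univ.filter (fun l => l ≠ i ∧ l ≠ j), bv (S i j) * bv (S j l) * bv (S l i))
      = ∑ j ∈ univ.filter (fun j => j ≠ i),
          ∑ l ∈ univ.filter (fun l => l ≠ i ∧ l ≠ j), bv (r j) * bv (T j l) * bv (T l i) :=
    Finset.sum_congr rfl fun j hj => Finset.sum_congr rfl fun l hl => by
      rw [hb1, hb2 _ _ (mem_ne hj), hb2 _ _ (mem_ne2 hl).1]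
  -- potential components
  have E1 : (∑ j, bv (S j j) * v j)
      = bv (r i) * v i + ∑ j ∈ univ.filter (fun j => j ≠ i), bv (T j j) * v j := by
    rw [sum_split_univ i, hb1]
    congr 1
    exact Finset.sum_congr rfl fun j hj => by rw [hb2 _ _ (mem_ne hj)]
  -- E2 pieces
  have E2a : (∑ y ∈ univ.filter (fun y => y ≠ i), bv (S i i) * bv (S y y))
      = bv (r i) * (∑ j ∈ univ.filter (fun j => j ≠ i), bv (T j j)) := by
    rw [Finset.mul_sum]
    exact Finset.sum_congr rfl fun y hy => by rw [hb1, hb2 _ _ (mem_ne hy)]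
  have E2b : (∑ x ∈ univ.filter (fun x => x ≠ i), bv (S x x) * bv (S i i))
      = bv (r i) * (∑ j ∈ univ.filter (fun j => j ≠ i), bv (T j j)) := by
    rw [Finset.mul_sum]
    exact Finset.sum_congr rfl fun x hx => by rw [hb1, hb2 _ _ (mem_ne hx)]; ring
  have E2c : (∑ x ∈ univ.filter (fun x => x ≠ i),
        ∑ y ∈ univ.filter (fun y => y ≠ x ∧ y ≠ i), bv (S x x) * bv (S y y))
      = ∑ x ∈ univ.filter (fun x => x ≠ i),
          ∑ y ∈ univ.filter (fun y => y ≠ x ∧ y ≠ i), bv (T x x) * bv (T y y) :=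
    Finset.sum_congr rfl fun x hx => Finset.sum_congr rfl fun y hy => by
      rw [hb2 _ _ (mem_ne hx), hb2 _ _ (mem_ne2 hy).2]
  have E2 := double_split i (fun x y => bv (S x x) * bv (S y y))
  rw [E2a, E2b, E2c] at E2
  -- E3 pieces
  have E3a : (∑ y ∈ univ.filter (fun y => y ≠ i),
        bv (S i i) * bv (S y y) * bv (S i y) * bv (S y i))
      = bv (r i) * (∑ j ∈ univ.filter (fun j => j ≠ i), bv (r j) * bv (T j i) * bv (T j j)) := by
    rw [Finset.mul_sum]
    exact Finset.sum_congr rfl fun y hy => by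
      rw [hb1, hb1, hb2 _ _ (mem_ne hy), hb2 _ _ (mem_ne hy)]; ring
  have E3b : (∑ x ∈ univ.filter (fun x => x ≠ i),
        bv (S x x) * bv (S i i) * bv (S x i) * bv (S i x))
      = bv (r i) * (∑ j ∈ univ.filter (fun j => j ≠ i), bv (r j) * bv (T j i) * bv (T j j)) := by
    rw [Finset.mul_sum]
    exact Finset.sum_congr rfl fun x hx => by
      rw [hb1, hb1, hb2 _ _ (mem_ne hx), hb2 _ _ (mem_ne hx)]; ring
  have E3c : (∑ x ∈ univ.filter (fun x => x ≠ i),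
        ∑ y ∈ univ.filter (fun y => y ≠ x ∧ y ≠ i),
          bv (S x x) * bv (S y y) * bv (S x y) * bv (S y x))
      = ∑ x ∈ univ.filter (fun x => x ≠ i),
          ∑ y ∈ univ.filter (fun y => y ≠ x ∧ y ≠ i),
            bv (T x x) * bv (T y y) * bv (T x y) * bv (T y x) :=
    Finset.sum_congr rfl fun x hx => Finset.sum_congr rfl fun y hy => by
      rw [hb2 _ _ (mem_ne hx), hb2 _ _ (mem_ne hx), hb2 _ _ (mem_ne2 hy).2, hb2 _ _ (mem_ne2 hy).2]
  have E3 := double_split i (fun x y => bv (S x x) * bv (S y y) * bv (S x y) * bv (S y x))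
  rw [E3a, E3b, E3c] at E3
  -- E4 pieces
  have E4a : (∑ y ∈ univ.filter (fun y => y ≠ i), bv (S i y) * w i y)
      = ∑ j ∈ univ.filter (fun j => j ≠ i), bv (r j) * w i j :=
    Finset.sum_congr rfl fun y hy => by rw [hb1]
  have E4b : (∑ x ∈ univ.filter (fun x => x ≠ i), bv (S x i) * w x i)
      = ∑ x ∈ univ.filter (fun x => x ≠ i), bv (T x i) * w x i :=
    Finset.sum_congr rfl fun x hx => by rw [hb2 _ _ (mem_ne hx)]
  have E4c : (∑ x ∈ univ.filter (fun x => x ≠ i),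
        ∑ y ∈ univ.filter (fun y => y ≠ x ∧ y ≠ i), bv (S x y) * w x y)
      = ∑ x ∈ univ.filter (fun x => x ≠ i),
          ∑ y ∈ univ.filter (fun y => y ≠ x ∧ y ≠ i), bv (T x y) * w x y :=
    Finset.sum_congr rfl fun x hx => Finset.sum_congr rfl fun y hy => by
      rw [hb2 _ _ (mem_ne hx)]
  have E4 := double_split i (fun x y => bv (S x y) * w x y)
  rw [E4a, E4b, E4c] at E4
  -- E5 pieces
  have E5a : (∑ y ∈ univ.filter (fun y => y ≠ i), bv (S i y) * bv (S y i))
      = ∑ j ∈ univ.filter (fun j => j ≠ i), bv (r j) * bv (T j i) :=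
    Finset.sum_congr rfl fun y hy => by rw [hb1, hb2 _ _ (mem_ne hy)]
  have E5b : (∑ x ∈ univ.filter (fun x => x ≠ i), bv (S x i) * bv (S i x))
      = ∑ j ∈ univ.filter (fun j => j ≠ i), bv (r j) * bv (T j i) :=
    Finset.sum_congr rfl fun x hx => by rw [hb1, hb2 _ _ (mem_ne hx)]; ring
  have E5c : (∑ x ∈ univ.filter (fun x => x ≠ i),
        ∑ y ∈ univ.filter (fun y => y ≠ x ∧ y ≠ i), bv (S x y) * bv (S y x))
      = ∑ x ∈ univ.filter (fun x => x ≠ i),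
          ∑ y ∈ univ.filter (fun y => y ≠ x ∧ y ≠ i), bv (T x y) * bv (T y x) :=
    Finset.sum_congr rfl fun x hx => Finset.sum_congr rfl fun y hy => by
      rw [hb2 _ _ (mem_ne hx), hb2 _ _ (mem_ne2 hy).2]
  have E5 := double_split i (fun x y => bv (S x y) * bv (S y x))
  rw [E5a, E5b, E5c] at E5
  -- E6 pieces
  have E6a : (∑ y ∈ univ.filter (fun y => y ≠ i),
        ∑ z ∈ univ.filter (fun z => z ≠ i ∧ z ≠ y), bv (S i y) * bv (S y z) * bv (S z i))
      = ∑ j ∈ univ.filter (fun j => j ≠ i),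
          ∑ l ∈ univ.filter (fun l => l ≠ i ∧ l ≠ j), bv (r j) * bv (T j l) * bv (T l i) :=
    Finset.sum_congr rfl fun y hy => Finset.sum_congr rfl fun z hz => by
      rw [hb1, hb2 _ _ (mem_ne hy), hb2 _ _ (mem_ne2 hz).1]
  have E6b : (∑ x ∈ univ.filter (fun x => x ≠ i),
        ∑ z ∈ univ.filter (fun z => z ≠ x ∧ z ≠ i), bv (S x i) * bv (S i z) * bv (S z x))
      = ∑ j ∈ univ.filter (fun j => j ≠ i),
          ∑ l ∈ univ.filter (fun l => l ≠ i ∧ l ≠ j), bv (r j) * bv (T j l) * bv (T l i) := by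
    have step1 : (∑ x ∈ univ.filter (fun x => x ≠ i),
          ∑ z ∈ univ.filter (fun z => z ≠ x ∧ z ≠ i), bv (S x i) * bv (S i z) * bv (S z x))
        = ∑ x ∈ univ.filter (fun x => x ≠ i),
            ∑ z ∈ univ.filter (fun z => z ≠ i ∧ z ≠ x),
              bv (r z) * bv (T z x) * bv (T x i) := by
      apply Finset.sum_congr rfl; intro x hx
      rw [show univ.filter (fun z => z ≠ x ∧ z ≠ i) = univ.filter (fun z => z ≠ i ∧ z ≠ x) by
        ext z; simp only [Finset.mem_filter, Finset.mem_univ, true_and]; tauto]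
      apply Finset.sum_congr rfl; intro z hz
      rw [hb1, hb2 _ _ (mem_ne hx), hb2 _ _ (mem_ne2 hz).1]; ring
    rw [step1, ← sum_swap_ne i (fun j l => bv (r j) * bv (T j l) * bv (T l i))]
  have E6c : (∑ x ∈ univ.filter (fun x => x ≠ i),
        ∑ y ∈ univ.filter (fun y => y ≠ x ∧ y ≠ i), bv (S x y) * bv (S y i) * bv (S i x))
      = ∑ j ∈ univ.filter (fun j => j ≠ i),
          ∑ l ∈ univ.filter (fun l => l ≠ i ∧ l ≠ j), bv (r j) * bv (T j l) * bv (T l i) := by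
    apply Finset.sum_congr rfl; intro x hx
    rw [show univ.filter (fun y => y ≠ x ∧ y ≠ i) = univ.filter (fun y => y ≠ i ∧ y ≠ x) by
      ext y; simp only [Finset.mem_filter, Finset.mem_univ, true_and]; tauto]
    apply Finset.sum_congr rfl; intro y hy
    rw [hb1, hb2 _ _ (mem_ne hx), hb2 _ _ (mem_ne2 hy).1]; ring
  have E6d : (∑ x ∈ univ.filter (fun x => x ≠ i),
        ∑ y ∈ univ.filter (fun y => y ≠ x ∧ y ≠ i),
          ∑ z ∈ univ.filter (fun z => z ≠ x ∧ z ≠ y ∧ z ≠ i),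
            bv (S x y) * bv (S y z) * bv (S z x))
      = ∑ x ∈ univ.filter (fun x => x ≠ i),
          ∑ y ∈ univ.filter (fun y => y ≠ x ∧ y ≠ i),
            ∑ z ∈ univ.filter (fun z => z ≠ x ∧ z ≠ y ∧ z ≠ i),
              bv (T x y) * bv (T y z) * bv (T z x) :=
    Finset.sum_congr rfl fun x hx => Finset.sum_congr rfl fun y hy =>
      Finset.sum_congr rfl fun z hz => by
        rw [hb2 _ _ (mem_ne hx), hb2 _ _ (mem_ne2 hy).2, hb2 _ _ (mem_ne3 hz).2.2]
  have E6 := triple_split i (fun x y z => bv (S x y) * bv (S y z) * bv (S z x))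
  rw [E6a, E6b, E6c, E6d] at E6
  simp only [potential, payoff, psi]
  rw [E1, E2, E3, E4, E5, E6, F2, F3, F4, F5, F6, hb1]
  ring

/-- **Conditional distributions of the stationary measure are logit best responses.** For every
player `i` and every fixed configuration of the coordinates not controlled by `i`, the
conditional distribution under `π(S) ∝ exp(Φ(S)/β)` of `i`'s choice `(a_i, {g_{ij}}_{j≠i})` is
the softmax of `i`'s own payoff. In particular every choice of player `i` receives strictly
positive conditional probability, and choices with higher payoff receive higher conditional
probability. -/
theorem conditional_is_logit (n : ℕ) (hn : 2 ≤ n)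
    (v : Fin n → ℝ) (w : Fin n → Fin n → ℝ) (h φ m q : ℝ) (β : ℝ) (hβ : 0 < β)
    (i : Fin n) (T : NetState n) :
    (∀ r : Fin n → Bool,
        condProb n v w h φ m q β i T r
          = Real.exp (payoff n v w h φ m q (updRow n i r T) i / β)
            / ∑ r' : Fin n → Bool, Real.exp (payoff n v w h φ m q (updRow n i r' T) i / β))
      ∧ (∀ r : Fin n → Bool, 0 < condProb n v w h φ m q β i T r)
      ∧ (∀ r r' : Fin n → Bool,
          payoff n v w h φ m q (updRow n i r' T) i < payoff n v w h φ m q (updRow n i r T) i →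
            condProb n v w h φ m q β i T r' < condProb n v w h φ m q β i T r) := by
  set E : (Fin n → Bool) → ℝ :=
    fun r => Real.exp (payoff n v w h φ m q (updRow n i r T) i / β) with hE
  set c : ℝ := Real.exp (psi n v w h φ m q i T / β) with hc
  have hcpos : 0 < c := Real.exp_pos _
  set Z : ℝ := ∑ T' : NetState n, Real.exp (potential n v w h φ m q T' / β) with hZ
  have hZpos : 0 < Z :=
    Finset.sum_pos (fun _ _ => Real.exp_pos _) Finset.univ_nonempty
  have hsd : ∀ r : Fin n → Bool,
      statDist n v w h φ m q β (updRow n i r T) = E r * c / Z := by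
    intro r
    rw [statDist, pot_eq, add_div, Real.exp_add]
  have hsum : 0 < ∑ r' : Fin n → Bool, E r' :=
    Finset.sum_pos (fun _ _ => Real.exp_pos _) Finset.univ_nonempty
  have hcond : ∀ r : Fin n → Bool,
      condProb n v w h φ m q β i T r = E r / ∑ r' : Fin n → Bool, E r' := by
    intro r
    rw [condProb]
    simp only [hsd]
    rw [show (∑ r' : Fin n → Bool, E r' * c / Z) = (∑ r' : Fin n → Bool, E r') * c / Z by
      rw [Finset.sum_mul, Finset.sum_div]]
    rw [div_div_div_eq, mul_comm]
    rw [mul_div_mul_left _ _ hZpos.ne', mul_div_mul_right _ _ hcpos.ne']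
  refine ⟨hcond, fun r => ?_, fun r r' hlt => ?_⟩
  · rw [hcond]
    exact div_pos (Real.exp_pos _) hsum
  · rw [hcond, hcond]
    rw [div_lt_div_iff_of_pos_right hsum]
    exact Real.exp_lt_exp.mpr (div_lt_div_of_pos_right hlt hβ)
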